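/- arXiv:1510.01549 — 4 statements merged into one kernel-verified Lean document; each statement's English description precedes it below -/
import Mathlib

section
/- Let s be a finite set of natural numbers and x : ℕ → ℝ a sequence with 0 ≤ x n < 1 for all n ∈ s. Then 0 ≤ (1 + Σ_{n∈s} x n) · ∏_{n∈s} (1 - x n) ≤ 1; equivalently, the finite M-value (1 + Σ_{n∈s} x n) · ∏_{n∈s} (1 - x n) - 1 lies in [-1, 0]. -/
private lemma key (s : Finset ℕ) (x : ℕ → ℝ) (hx : ∀ n ∈ s, 0 ≤ x n ∧ x n < 1) :
    0 ≤ (1 + ∑ n ∈ s, x n) * ∏ n ∈ s, (1 - x n) ∧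
    (1 + ∑ n ∈ s, x n) * ∏ n ∈ s, (1 - x n) ≤ 1 := by
  induction s using Finset.induction_on with
  | empty => simp
  | @insert a t ha ih =>

    obtain ⟨hxa0, hxa1⟩ := hx a (Finset.mem_insert_self a t)
    have hx' : ∀ n ∈ t, 0 ≤ x n ∧ x n < 1 := fun n hn => hx n (Finset.mem_insert_of_mem hn)
    obtain ⟨ih0, ih1⟩ := ih hx'
    have hS0 : 0 ≤ ∑ n ∈ t, x n := Finset.sum_nonneg fun n hn => (hx' n hn).1
    have hP0 : 0 ≤ ∏ n ∈ t, (1 - x n) :=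
      Finset.prod_nonneg fun n hn => by linarith [(hx' n hn).2]
    have hP1 : ∏ n ∈ t, (1 - x n) ≤ 1 :=
      Finset.prod_le_one (fun n hn => by linarith [(hx' n hn).2])
        (fun n hn => by linarith [(hx' n hn).1])
    rw [Finset.sum_insert ha, Finset.prod_insert ha]
    constructor
    · exact mul_nonneg (by linarith) (mul_nonneg (by linarith) hP0)
    · have key : (1 + (x a + ∑ n ∈ t, x n)) * ((1 - x a) * ∏ n ∈ t, (1 - x n))
          = (1 - x a) * ((1 + ∑ n ∈ t, x n) * ∏ n ∈ t, (1 - x n))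
            + x a * (1 - x a) * ∏ n ∈ t, (1 - x n) := by ring
      rw [key]
      have h1 : (1 - x a) * ((1 + ∑ n ∈ t, x n) * ∏ n ∈ t, (1 - x n)) ≤ 1 - x a := by
        nlinarith
      have h2 : x a * (1 - x a) * ∏ n ∈ t, (1 - x n) ≤ x a * (1 - x a) := by
        nlinarith [mul_nonneg hxa0 (by linarith : (0:ℝ) ≤ 1 - x a)]
      nlinarith

/-- For a finite set `s` of naturals and `0 ≤ x n < 1` on `s`,
`0 ≤ (1 + ∑_{n∈s} x n) · ∏_{n∈s} (1 - x n) ≤ 1`; equivalently the finite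
M-value `(1 + ∑) · ∏ - 1` lies in `[-1, 0]`. -/
theorem stmt_2 (s : Finset ℕ) (x : ℕ → ℝ) (hx : ∀ n ∈ s, 0 ≤ x n ∧ x n < 1) :
    (0 ≤ (1 + ∑ n ∈ s, x n) * ∏ n ∈ s, (1 - x n) ∧
     (1 + ∑ n ∈ s, x n) * ∏ n ∈ s, (1 - x n) ≤ 1) ∧
    (-1 ≤ (1 + ∑ n ∈ s, x n) * ∏ n ∈ s, (1 - x n) - 1 ∧
     (1 + ∑ n ∈ s, x n) * ∏ n ∈ s, (1 - x n) - 1 ≤ 0) := by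
  obtain ⟨h0, h1⟩ := key s x hx
  exact ⟨⟨h0, h1⟩, by linarith, by linarith⟩
end

section
/- Let x : ℕ → ℝ be a sequence with 0 < x n < 1 for all n, and suppose Σ_{n=0}^∞ x n converges. Then the M-value M(x) := (1 + Σ_{n=0}^∞ x n) · ∏_{n=0}^∞ (1 - x n) - 1 satisfies the strict inequalities -1 < M(x) < 0. -/
/-!
Write `S = ∑ xₙ` and `P = ∏ (1 - xₙ)`. Since `∑ log (1 - xₙ)` converges, `P = exp (∑ log (1 - xₙ))`
is positive, and `log (1 - t) ≤ -t` gives `P ≤ exp (-S)`. As `S > 0`, the strict inequality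
`1 + S < exp S` yields `(1 + S) P ≤ (1 + S) exp (-S) < 1`.
-/

open Real

namespace Real

variable {ι : Type*} {x : ι → ℝ}

lemma summable_log_one_sub_of_summable (hx : Summable x) :
    Summable fun i ↦ log (1 - x i) := by
  simpa only [sub_eq_add_neg] using summable_log_one_add_of_summable hx.neg

lemma tprod_one_sub_pos_of_summable (hlt : ∀ i, x i < 1) (hx : Summable x) :
    0 < ∏' i, (1 - x i) := by
  rw [← rexp_tsum_eq_tprod (fun i ↦ sub_pos.2 (hlt i)) (summable_log_one_sub_of_summable hx)]
  exact exp_pos _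

lemma tprod_one_sub_le_exp_neg_tsum (hlt : ∀ i, x i < 1) (hx : Summable x) :
    ∏' i, (1 - x i) ≤ exp (-∑' i, x i) := by
  rw [← rexp_tsum_eq_tprod (fun i ↦ sub_pos.2 (hlt i)) (summable_log_one_sub_of_summable hx),
    exp_le_exp, ← tsum_neg]
  refine (summable_log_one_sub_of_summable hx).tsum_le_tsum (fun i ↦ ?_) hx.neg
  linarith [log_le_sub_one_of_pos (sub_pos.2 (hlt i))]

lemma one_add_mul_exp_neg_lt_one {s : ℝ} (hs : s ≠ 0) : (1 + s) * exp (-s) < 1 := by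
  have hexp : exp s * exp (-s) = 1 := by rw [← exp_add, add_neg_cancel, exp_zero]
  nlinarith [add_one_lt_exp hs, exp_pos (-s)]

end Real

/-- If `0 < x n < 1` for all `n` and `∑ x n` converges, then
`M(x) := (1 + ∑' x n) · ∏' (1 - x n) - 1` satisfies `-1 < M(x) < 0`. -/
theorem stmt_3 (x : ℕ → ℝ) (hx : ∀ n, 0 < x n ∧ x n < 1) (hsum : Summable x) :
    -1 < (1 + ∑' n, x n) * (∏' n, (1 - x n)) - 1 ∧
    (1 + ∑' n, x n) * (∏' n, (1 - x n)) - 1 < 0 := by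
  have hlt : ∀ n, x n < 1 := fun n ↦ (hx n).2
  have hS : 0 < ∑' n, x n := hsum.tsum_pos (fun n ↦ (hx n).1.le) 0 (hx 0).1
  have hP := Real.tprod_one_sub_pos_of_summable hlt hsum
  constructor
  · linarith [mul_pos (by linarith : 0 < 1 + ∑' n, x n) hP]
  · calc (1 + ∑' n, x n) * (∏' n, (1 - x n)) - 1
        ≤ (1 + ∑' n, x n) * exp (-∑' n, x n) - 1 := by
          gcongr
          exact Real.tprod_one_sub_le_exp_neg_tsum hlt hsum
      _ < 0 := by linarith [Real.one_add_mul_exp_neg_lt_one hS.ne']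
end

section
/- Let x : ℕ → ℝ be a sequence with 0 < x n < 1 for all n. Define the partial M-values M_N := (1 + Σ_{n<N} x n) · ∏_{n<N} (1 - x n) - 1. Then the sequence (M_N) is strictly decreasing: M_{N+1} < M_N for every N. -/
/-- If `0 < x n < 1` for all `n`, the partial M-values
`M_N := (1 + ∑_{n<N} x n) · ∏_{n<N} (1 - x n) - 1` form a strictly decreasing
sequence. -/
theorem stmt_4 (x : ℕ → ℝ) (hx : ∀ n, 0 < x n ∧ x n < 1) (N : ℕ) :
    (1 + ∑ n ∈ Finset.range (N + 1), x n) * ∏ n ∈ Finset.range (N + 1), (1 - x n) - 1 <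
    (1 + ∑ n ∈ Finset.range N, x n) * ∏ n ∈ Finset.range N, (1 - x n) - 1 := by
  rw [Finset.sum_range_succ, Finset.prod_range_succ]
  have hP : 0 < ∏ n ∈ Finset.range N, (1 - x n) :=
    Finset.prod_pos fun i _ => by linarith [(hx i).2]
  have hS : 0 ≤ ∑ n ∈ Finset.range N, x n :=
    Finset.sum_nonneg fun i _ => (hx i).1.le
  have h1 := (hx N).1
  have h2 := (hx N).2
  nlinarith [mul_pos hP h1, mul_nonneg (mul_nonneg hP.le h1.le) hS,
    mul_pos (mul_pos hP h1) h1]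
end

section
/- Let x : ℕ → ℝ be a sequence with 0 < x n < 1 for all n (no summability assumed). Then the sequence of partial M-values M_N := (1 + Σ_{n<N} x n) · ∏_{n<N} (1 - x n) - 1 converges to a limit L, and L ∈ [-1, 0]. -/
/-- If `0 < x n < 1` for all `n` (no summability assumed), the partial
M-values `M_N := (1 + ∑_{n<N} x n) · ∏_{n<N} (1 - x n) - 1` converge to a limit
`L ∈ [-1, 0]`. -/
theorem stmt_5 (x : ℕ → ℝ) (hx : ∀ n, 0 < x n ∧ x n < 1) :
    ∃ L : ℝ, Filter.Tendsto
      (fun N => (1 + ∑ n ∈ Finset.range N, x n) * ∏ n ∈ Finset.range N, (1 - x n) - 1)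
      Filter.atTop (nhds L) ∧ -1 ≤ L ∧ L ≤ 0 := by
  set f : ℕ → ℝ := fun N =>
    (1 + ∑ n ∈ Finset.range N, x n) * ∏ n ∈ Finset.range N, (1 - x n) with hf
  have hP : ∀ N, 0 < ∏ n ∈ Finset.range N, (1 - x n) := by
    intro N
    exact Finset.prod_pos fun i _ => by linarith [(hx i).2]
  have hS : ∀ N, 0 ≤ ∑ n ∈ Finset.range N, x n := by
    intro N
    exact Finset.sum_nonneg fun i _ => (hx i).1.le
  have hfnonneg : ∀ N, 0 ≤ f N := fun N => by
    have h1 := hP N; have h2 := hS N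
    simp only [hf]
    nlinarith
  have hanti : Antitone f := by
    apply antitone_nat_of_succ_le
    intro N
    simp only [hf, Finset.sum_range_succ, Finset.prod_range_succ]
    have hp := hP N
    have hs := hS N
    have h1 := (hx N).1
    have h2 := (hx N).2
    nlinarith [mul_pos hp h1]
  have hbdd : BddBelow (Set.range f) := ⟨0, by rintro _ ⟨N, rfl⟩; exact hfnonneg N⟩
  have htend := tendsto_atTop_ciInf hanti hbdd
  refine ⟨(⨅ N, f N) - 1, ?_, ?_, ?_⟩
  · exact htend.sub_const 1
  · have : (0:ℝ) ≤ ⨅ N, f N := le_ciInf hfnonneg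
    linarith
  · have h0 : (⨅ N, f N) ≤ f 0 := ciInf_le hbdd 0
    have : f 0 = 1 := by simp [hf]
    linarith
end
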